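/- Let d ∈ ℕ, b > 0, and let f : ℝ^d × ℝ^d → ℝ be nonnegative and measurable with spatial density ρ(x) = ∫_{ℝ^d} f(x,v) dv. Then there is a constant C depending only on b and d such that ‖ρ‖_{L^{(b+d)/d}(ℝ^d)} ≤ C ‖f‖_{L^∞(ℝ^{2d})}^{b/(d+b)} (∫_{ℝ^d × ℝ^d} |v|^b f(x,v) dx dv)^{d/(b+d)}. -/

import Mathlib

open MeasureTheory Metric ENNReal

/-!
Split the velocity integral at `‖v‖ = R`: the ball contributes at most `|B₁| ‖f‖_∞ R^d` and its
complement at most `R^{-b} m(x)`, where `m(x) = ∫ ‖v‖^b f(x, v) dv`. Choosing `R` to balance the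
two terms gives `ρ(x) ≤ 2 (|B₁| ‖f‖_∞)^{b/(b+d)} m(x)^{d/(b+d)}`. Raised to the power `(b+d)/d`
the right side becomes linear in `m`, so integrating in `x` gives the bound with
`C = 2 |B₁|^{b/(b+d)}`.
-/

-- `R = (m / a) ^ (b + d)⁻¹` balances the two terms `a R^d` and `R^{-b} m`.
theorem Real.mul_rpow_and_rpow_neg_mul_eq {a m b d : ℝ} (ha : 0 < a) (hm : 0 < m)
    (hbd : b + d ≠ 0) :
    a * ((m / a) ^ (b + d)⁻¹) ^ d = a ^ (b / (b + d)) * m ^ (d / (b + d)) ∧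
      ((m / a) ^ (b + d)⁻¹) ^ (-b) * m = a ^ (b / (b + d)) * m ^ (d / (b + d)) := by
  have hsplit (x : ℝ) (hx : 0 < x) : x = x ^ (b / (b + d)) * x ^ (d / (b + d)) := by
    rw [← Real.rpow_add hx, ← add_div, div_self hbd, Real.rpow_one]
  rw [← Real.rpow_mul (div_pos hm ha).le, ← Real.rpow_mul (div_pos hm ha).le,
    Real.div_rpow hm.le ha.le, Real.div_rpow hm.le ha.le, inv_mul_eq_div, inv_mul_eq_div,
    neg_div, Real.rpow_neg hm.le, Real.rpow_neg ha.le]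
  constructor
  · field_simp
    linear_combination hsplit a ha
  · field_simp
    exact hsplit m hm

theorem ENNReal.le_two_mul_rpow_mul_rpow_of_forall_le {ρ A B : ℝ≥0∞} {b d : ℝ} (hb : 0 < b)
    (hd : 0 < d)
    (hρ : ∀ R : ℝ, 0 < R → ρ ≤ A * ENNReal.ofReal (R ^ d) + ENNReal.ofReal (R ^ (-b)) * B)
    (h0 : A = 0 ∨ B = 0 → ρ = 0) :
    ρ ≤ 2 * A ^ (b / (b + d)) * B ^ (d / (b + d)) := by
  have hbd : 0 < b + d := add_pos hb hd
  rcases eq_or_ne A 0 with hA | hA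
  · simp [h0 (.inl hA)]
  rcases eq_or_ne B 0 with hB | hB
  · simp [h0 (.inr hB)]
  have hpos {x : ℝ≥0∞} (hx : x ≠ 0) (p : ℝ) (hp : 0 < p) : x ^ p ≠ 0 :=
    (rpow_pos_of_nonneg (pos_iff_ne_zero.2 hx) hp.le).ne'
  rcases eq_or_ne A ∞ with rfl | hA'
  · rw [top_rpow_of_pos (div_pos hb hbd), mul_top two_ne_zero,
      top_mul (hpos hB _ (div_pos hd hbd))]
    exact le_top
  rcases eq_or_ne B ∞ with rfl | hB'
  · rw [top_rpow_of_pos (div_pos hd hbd),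
      mul_top (mul_ne_zero two_ne_zero (hpos hA _ (div_pos hb hbd)))]
    exact le_top
  obtain ⟨a, ha, rfl⟩ : ∃ a : ℝ, 0 < a ∧ A = ENNReal.ofReal a :=
    ⟨A.toReal, toReal_pos hA hA', (ofReal_toReal hA').symm⟩
  obtain ⟨m, hm, rfl⟩ : ∃ m : ℝ, 0 < m ∧ B = ENNReal.ofReal m :=
    ⟨B.toReal, toReal_pos hB hB', (ofReal_toReal hB').symm⟩
  obtain ⟨hball, htail⟩ := Real.mul_rpow_and_rpow_neg_mul_eq ha hm hbd.ne'
  calc _ ≤ _ := hρ _ (Real.rpow_pos_of_pos (div_pos hm ha) _)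
    _ = _ := by
      rw [← ofReal_mul ha.le,
        ← ofReal_mul (Real.rpow_nonneg (Real.rpow_nonneg (div_pos hm ha).le _) _), hball, htail,
        ofReal_mul (Real.rpow_nonneg ha.le _), ofReal_rpow_of_pos ha, ofReal_rpow_of_pos hm]
      ring

namespace MeasureTheory

theorem lintegral_rpow_rpow_inv_le_mul {α : Type*} [MeasurableSpace α] {μ : Measure α}
    {g h : α → ℝ≥0∞} {K : ℝ≥0∞} {p : ℝ} (hp : 0 < p) (hh : AEMeasurable h μ)
    (hgh : ∀ᵐ x ∂μ, g x ≤ K * h x ^ p⁻¹) :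
    (∫⁻ x, g x ^ p ∂μ) ^ p⁻¹ ≤ K * (∫⁻ x, h x ∂μ) ^ p⁻¹ := by
  calc (∫⁻ x, g x ^ p ∂μ) ^ p⁻¹ ≤ (∫⁻ x, K ^ p * h x ∂μ) ^ p⁻¹ := by
        gcongr ?_ ^ _
        refine lintegral_mono_ae (hgh.mono fun x hx ↦ ?_)
        calc g x ^ p ≤ (K * h x ^ p⁻¹) ^ p := by gcongr
          _ = K ^ p * h x := by rw [mul_rpow_of_nonneg _ _ hp.le, rpow_inv_rpow hp.ne']
    _ = K * (∫⁻ x, h x ∂μ) ^ p⁻¹ := by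
        rw [lintegral_const_mul'' _ hh, mul_rpow_of_nonneg _ _ (inv_nonneg.2 hp.le),
          rpow_rpow_inv hp.ne']

theorem lintegral_eq_zero_of_lintegral_ofReal_norm_rpow_mul_eq_zero {E : Type*}
    [NormedAddCommGroup E] [MeasurableSpace E] [OpensMeasurableSpace E] {μ : Measure E}
    [NullSingletonClass μ] {g : E → ℝ≥0∞} (hg : AEMeasurable g μ) (b : ℝ)
    (h : ∫⁻ v, ENNReal.ofReal (‖v‖ ^ b) * g v ∂μ = 0) : ∫⁻ v, g v ∂μ = 0 := by
  have hmeas : AEMeasurable (fun v : E ↦ ENNReal.ofReal (‖v‖ ^ b) * g v) μ := by fun_prop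
  rw [lintegral_eq_zero_iff' hg]
  filter_upwards [(lintegral_eq_zero_iff' hmeas).1 h, compl_mem_ae_iff.2 (measure_singleton 0)]
    with v hv (hv0 : v ≠ 0)
  have hnorm : ENNReal.ofReal (‖v‖ ^ b) ≠ 0 :=
    (ofReal_pos.2 (Real.rpow_pos_of_pos (norm_pos_iff.2 hv0) b)).ne'
  exact (mul_eq_zero.1 hv).resolve_left hnorm

section AddHaar

variable {E : Type*} [NormedAddCommGroup E] [NormedSpace ℝ E] [FiniteDimensional ℝ E]
  [MeasurableSpace E] [BorelSpace E] (μ : Measure E) [μ.IsAddHaarMeasure]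

open Module

theorem lintegral_le_mul_volume_ball_add_rpow_neg_mul {g : E → ℝ≥0∞} {M : ℝ≥0∞}
    (hgM : ∀ᵐ v ∂μ, g v ≤ M) {b R : ℝ} (hb : 0 ≤ b) (hR : 0 < R) :
    ∫⁻ v, g v ∂μ ≤ μ (ball 0 1) * M * ENNReal.ofReal (R ^ (finrank ℝ E : ℝ)) +
      ENNReal.ofReal (R ^ (-b)) * ∫⁻ v, ENNReal.ofReal (‖v‖ ^ b) * g v ∂μ := by
  rw [← lintegral_add_compl _ (measurableSet_ball (x := (0 : E)) (ε := R))]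
  gcongr
  · calc ∫⁻ v in ball 0 R, g v ∂μ ≤ ∫⁻ _ in ball 0 R, M ∂μ :=
          lintegral_mono_ae (ae_restrict_of_ae hgM)
      _ = _ := by
          rw [setLIntegral_const, Measure.addHaar_ball_of_pos μ 0 hR, Real.rpow_natCast]; ring
  · calc ∫⁻ v in (ball 0 R)ᶜ, g v ∂μ
        ≤ ∫⁻ v in (ball 0 R)ᶜ,
            ENNReal.ofReal (R ^ (-b)) * (ENNReal.ofReal (‖v‖ ^ b) * g v) ∂μ := by
          refine setLIntegral_mono' measurableSet_ball.compl fun v hv ↦ ?_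
          have hRv : R ≤ ‖v‖ := by simpa using hv
          have hone : 1 ≤ R ^ (-b) * ‖v‖ ^ b := by
            rw [Real.rpow_neg hR.le, inv_mul_eq_div, one_le_div (Real.rpow_pos_of_pos hR b)]
            exact Real.rpow_le_rpow hR.le hRv hb
          calc g v = 1 * g v := (one_mul _).symm
            _ ≤ ENNReal.ofReal (R ^ (-b) * ‖v‖ ^ b) * g v := by
                gcongr
                exact ofReal_one ▸ ofReal_le_ofReal hone
            _ = _ := by rw [ofReal_mul (Real.rpow_nonneg hR.le _), mul_assoc]
      _ ≤ _ := by
          rw [lintegral_const_mul' _ _ ofReal_ne_top]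
          exact mul_le_mul_right (setLIntegral_le_lintegral _ _) _

theorem lintegral_le_two_mul_rpow_mul_rpow_mul_moment_rpow [Nontrivial E] {g : E → ℝ≥0∞}
    (hg : AEMeasurable g μ) {M : ℝ≥0∞} (hgM : ∀ᵐ v ∂μ, g v ≤ M) {b : ℝ} (hb : 0 < b) :
    ∫⁻ v, g v ∂μ ≤ 2 * μ (ball 0 1) ^ (b / (b + finrank ℝ E)) * M ^ (b / (b + finrank ℝ E)) *
      (∫⁻ v, ENNReal.ofReal (‖v‖ ^ b) * g v ∂μ) ^ ((finrank ℝ E : ℝ) / (b + finrank ℝ E)) := by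
  have hn : (0 : ℝ) < finrank ℝ E := by exact_mod_cast finrank_pos
  rw [mul_assoc 2, ← mul_rpow_of_nonneg _ _ (div_pos hb (add_pos hb hn)).le]
  refine ENNReal.le_two_mul_rpow_mul_rpow_of_forall_le hb hn
    (fun R hR ↦ lintegral_le_mul_volume_ball_add_rpow_neg_mul μ hgM hb.le hR) ?_
  rintro (hA | hB)
  · have hM : M = 0 := (mul_eq_zero.1 hA).resolve_left (measure_ball_pos μ 0 one_pos).ne'
    exact le_antisymm ((lintegral_mono_ae hgM).trans_eq (by simp [hM])) bot_le
  · exact lintegral_eq_zero_of_lintegral_ofReal_norm_rpow_mul_eq_zero hg b hB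

end AddHaar

theorem Measure.ae_ae_enorm_le_eLpNorm_top {α β ε : Type*} [MeasurableSpace α]
    [MeasurableSpace β] [ENorm ε] {μ : Measure α} {ν : Measure β} [SFinite ν] (f : α × β → ε) :
    ∀ᵐ x ∂μ, ∀ᵐ y ∂ν, ‖f (x, y)‖ₑ ≤ eLpNorm f ∞ (μ.prod ν) := by
  rw [eLpNorm_exponent_top]
  exact Measure.ae_ae_of_ae_prod ae_le_eLpNormEssSup

end MeasureTheory

/-- Density interpolation: for `b > 0` there is `C = C(b,d)` such that for
every nonnegative measurable `f` on phase space, the spatial density `ρ(x) = ∫ f(x,v) dv`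
satisfies `‖ρ‖_{L^{(b+d)/d}} ≤ C ‖f‖_∞^{b/(d+b)} (∫∫ |v|^b f dx dv)^{d/(b+d)}`. -/
theorem density_moment_interpolation (d : ℕ) (hd : 0 < d) (b : ℝ) (hb : 0 < b) :
    ∃ C : ℝ, 0 < C ∧
      ∀ f : EuclideanSpace ℝ (Fin d) × EuclideanSpace ℝ (Fin d) → ℝ,
        Measurable f → (∀ z, 0 ≤ f z) →
        (∫⁻ x : EuclideanSpace ℝ (Fin d),
            (∫⁻ v, ENNReal.ofReal (f (x, v))) ^ ((b + d) / (d : ℝ))) ^ ((d : ℝ) / (b + d)) ≤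
          ENNReal.ofReal C * (eLpNorm f ⊤ volume) ^ (b / ((d : ℝ) + b)) *
            (∫⁻ z : EuclideanSpace ℝ (Fin d) × EuclideanSpace ℝ (Fin d),
              ENNReal.ofReal (‖z.2‖ ^ b * f z)) ^ ((d : ℝ) / (b + d)) := by
  have : Nonempty (Fin d) := ⟨⟨0, hd⟩⟩
  have hdim : (Module.finrank ℝ (EuclideanSpace ℝ (Fin d)) : ℝ) = d := by
    rw [finrank_euclideanSpace_fin]
  set V := volume (ball (0 : EuclideanSpace ℝ (Fin d)) 1)
  have hV : 0 < V.toReal := toReal_pos (measure_ball_pos _ _ one_pos).ne' measure_ball_lt_top.ne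
  have hC : ENNReal.ofReal (2 * V.toReal ^ (b / (b + d))) = 2 * V ^ (b / (b + d)) := by
    rw [ofReal_mul zero_le_two, ← ofReal_rpow_of_pos hV, ofReal_toReal measure_ball_lt_top.ne,
      ofReal_ofNat]
  refine ⟨2 * V.toReal ^ (b / (b + d)), by positivity, fun f hf hf0 ↦ ?_⟩
  rw [Measure.volume_eq_prod, lintegral_prod _ (by fun_prop), add_comm (d : ℝ) b, hC,
    ← inv_div (b + d) (d : ℝ)]
  simp only [ofReal_mul (Real.rpow_nonneg (norm_nonneg _) _)]
  refine lintegral_rpow_rpow_inv_le_mul (by positivity) (by fun_prop) ?_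
  filter_upwards [Measure.ae_ae_enorm_le_eLpNorm_top (μ := volume) (ν := volume) f] with x hx
  have hsec := hx.mono fun v hv ↦ (Real.enorm_eq_ofReal (hf0 (x, v))).symm.trans_le hv
  have := lintegral_le_two_mul_rpow_mul_rpow_mul_moment_rpow volume (by fun_prop) hsec hb
  rwa [hdim, ← inv_div (b + d) (d : ℝ)] at this
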